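/- For all real numbers p and u with 0 ≤ u < p < 1, the difference between the expression A(u) = (1 - u/2)·log(1 - u/2) - (u/2)·log(u/2) - (1 - u)·log(1 - u) + (1 - u)·λ̃((p - u)/(1 - u)) and the expression B(u) = (1 - p + u/2)·log(1 - p + u/2) - (u/2)·log(u/2) - (1 - p)·log(1 - p) + (1 - u/2)·λ̃((p - u)/(1 - u/2)) equals (1/2)·(p - u)·log((1 - u/2)/(1 - u)), where λ̃(q) = (1/2)·q·log(2d) - (q/2)·log q - (1 - q)·log(1 - q) - q/2 for a fixed real constant d > 0. -/

import Mathlib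

open Real

/-- Mean-field approximation to the monomer-dimer entropy. -/
noncomputable def lamTilde (d q : ℝ) : ℝ :=
  (1 / 2) * q * Real.log (2 * d) - (q / 2) * Real.log q
    - (1 - q) * Real.log (1 - q) - q / 2

lemma mul_div_mul_log_div (a : ℝ) {y : ℝ} (hy : y ≠ 0) :
    y * (a / y * log (a / y)) = a * (log a - log y) := by
  rcases eq_or_ne a 0 with rfl | ha
  · simp
  · rw [log_div ha hy]
    field_simp

/- Clearing the denominator turns each `log (· / y)` into `log · - log y`; after this the
main identity is a ring identity between logarithms. -/
lemma mul_lamTilde_div (d x : ℝ) {y : ℝ} (hy : y ≠ 0) :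
    y * lamTilde d (x / y) = x / 2 * log (2 * d) - x / 2 * (log x - log y)
      - (y - x) * (log (y - x) - log y) - x / 2 := by
  have hx := mul_div_mul_log_div x hy
  have hyx := mul_div_mul_log_div (y - x) hy
  have hxy : y * (x / y) = x := mul_div_cancel₀ x hy
  rw [sub_div, div_self hy] at hyx
  rw [lamTilde]
  linear_combination (log (2 * d) / 2 - 1 / 2) * hxy - hx / 2 - hyx

theorem stmt_0_general (d p u : ℝ) (hup : u < p) (hp1 : p < 1) :
    ((1 - u / 2) * Real.log (1 - u / 2) - (u / 2) * Real.log (u / 2)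
        - (1 - u) * Real.log (1 - u) + (1 - u) * lamTilde d ((p - u) / (1 - u)))
      - ((1 - p + u / 2) * Real.log (1 - p + u / 2) - (u / 2) * Real.log (u / 2)
        - (1 - p) * Real.log (1 - p) + (1 - u / 2) * lamTilde d ((p - u) / (1 - u / 2)))
      = (1 / 2) * (p - u) * Real.log ((1 - u / 2) / (1 - u)) := by
  have h₁ : 1 - u ≠ 0 := by linarith
  have h₂ : 1 - u / 2 ≠ 0 := by linarith
  rw [mul_lamTilde_div d (p - u) h₁, mul_lamTilde_div d (p - u) h₂, log_div h₂ h₁,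
    show 1 - u - (p - u) = 1 - p by ring, show 1 - u / 2 - (p - u) = 1 - p + u / 2 by ring]
  ring

theorem stmt_0 (d p u : ℝ) (hd : 0 < d) (hu : 0 ≤ u) (hup : u < p) (hp1 : p < 1) :
    ((1 - u / 2) * Real.log (1 - u / 2) - (u / 2) * Real.log (u / 2)
        - (1 - u) * Real.log (1 - u) + (1 - u) * lamTilde d ((p - u) / (1 - u)))
      - ((1 - p + u / 2) * Real.log (1 - p + u / 2) - (u / 2) * Real.log (u / 2)
        - (1 - p) * Real.log (1 - p) + (1 - u / 2) * lamTilde d ((p - u) / (1 - u / 2)))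
      = (1 / 2) * (p - u) * Real.log ((1 - u / 2) / (1 - u)) :=
  stmt_0_general d p u hup hp1
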